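/- arXiv:1304.6219 — 2 statements merged into one kernel-verified Lean document; each statement's English description precedes it below -/
import Mathlib

section
/- Let φ₀ ∈ ℂ^N ⊗ ℂ^M be a fixed unit vector with local purity π₀ = Tr((Tr_B |φ₀⟩⟨φ₀|)²), and let φ be a Gaussian random vector in ℂ^N ⊗ ℂ^M with i.i.d. components of mean 0 and variance 1/(NM). For ε ∈ [0,1], set ψ = ε φ₀ + √(1−ε²) φ. Then the expectation of the purity Tr((Tr_B |ψ⟩⟨ψ|)²) equals ε⁴ π₀ + (1−ε⁴)(M+N)/(MN). -/
/-!
Write `ψ = y + s X` with `y = ε φ₀` and `s = √(1 - ε²)`, and expand the purity as the quartic sum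
`∑_{i,j,m,m'} ψ_{im} ψ̄_{jm} ψ_{jm'} ψ̄_{im'}`. Independence of the entries factorises the
expectation of each term over distinct indices, giving `y_{im} ȳ_{jm} y_{jm'} ȳ_{im'}` plus
corrections of order `τ = s² / (NM)` when `m = m'` or `i = j`. The circular Gaussian moments give
`E|ψ_a|⁴ = 2 (E|ψ_a|²)² - |y_a|⁴`, which is exactly what makes the doubly coincident terms
(`i = j` and `m = m'`) obey the same formula. Summing,
`E π(ψ) = π(y) + 2 (N + M) τ ‖y‖² + N M (N + M) τ²`, and `π(y) = ε⁴ π₀`, `‖y‖² = ε²`,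
`N M τ = 1 - ε²` turn this into `ε⁴ π₀ + (1 - ε⁴)(N + M)/(NM)`.
-/

open MeasureTheory ProbabilityTheory Finset
open scoped ENNReal

instance ENNReal.HolderTriple.instFourFourTwo : ENNReal.HolderTriple 4 4 2 :=
  ⟨by
    rw [← ENNReal.add_halves (2⁻¹ : ℝ≥0∞)]
    simp [ENNReal.div_eq_inv_mul, ← ENNReal.mul_inv]
    norm_num⟩

section Integrability

variable {Ω 𝕜 : Type*} [MeasurableSpace Ω] [NormedRing 𝕜] {μ : Measure Ω} {f g h k : Ω → 𝕜}

lemma integrable_mul_mul_mul_of_memLp_four (hf : MemLp f 4 μ) (hg : MemLp g 4 μ)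
    (hh : MemLp h 4 μ) (hk : MemLp k 4 μ) :
    Integrable (fun ω => f ω * g ω * (h ω * k ω)) μ :=
  memLp_one_iff_integrable.mp ((hk.mul' hh (r := 2)).mul' (hg.mul' hf (r := 2)))

variable [IsFiniteMeasure μ]

lemma integrable_mul_mul_of_memLp_four (hf : MemLp f 4 μ) (hg : MemLp g 4 μ)
    (hh : MemLp h 4 μ) : Integrable (fun ω => f ω * g ω * h ω) μ := by
  simpa using integrable_mul_mul_mul_of_memLp_four hf hg hh (memLp_const 1)

lemma integrable_mul_of_memLp_four (hf : MemLp f 4 μ) (hg : MemLp g 4 μ) :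
    Integrable (fun ω => f ω * g ω) μ := by
  simpa using integrable_mul_mul_of_memLp_four hf hg (memLp_const 1)

end Integrability

section Moments

variable {Ω : Type*} [MeasurableSpace Ω] {μ : Measure Ω}

lemma star_add_ofReal_mul (z : ℂ) (s : ℝ) (x : ℂ) :
    star (z + s * x) = star z + s * star x := by
  simp [Complex.conj_ofReal]

lemma integral_star_eq_zero {f : Ω → ℂ} (hf : ∫ ω, f ω ∂μ = 0) : ∫ ω, star (f ω) ∂μ = 0 := by
  simpa [hf] using integral_conj (f := f) (μ := μ)

variable [IsProbabilityMeasure μ] {X : Ω → ℂ} {σ : ℝ}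

lemma integral_add_ofReal_mul (z : ℂ) (s : ℝ) (hX : Integrable X μ) (hmean : ∫ ω, X ω ∂μ = 0) :
    ∫ ω, z + s * X ω ∂μ = z := by
  simp (disch := fun_prop) only [integral_add, integral_const_mul, integral_const, hmean]
  simp

lemma integral_mul_star_add_ofReal_mul (z : ℂ) (s : ℝ) (hX : MemLp X 2 μ)
    (hmean : ∫ ω, X ω ∂μ = 0) (hvar : ∫ ω, X ω * star (X ω) ∂μ = σ) :
    ∫ ω, (z + s * X ω) * star (z + s * X ω) ∂μ = ((‖z‖ ^ 2 + s ^ 2 * σ : ℝ) : ℂ) := by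
  -- integrability of the monomials below, for the `fun_prop` discharger
  have hint₁ : Integrable X μ := hX.integrable one_le_two
  have hint₁' : Integrable (fun ω => star (X ω)) μ := hX.star.integrable one_le_two
  have hint₂ : Integrable (fun ω => X ω * star (X ω)) μ := hX.integrable_mul hX.star
  have expand : ∀ ω, (z + s * X ω) * star (z + s * X ω) = z * star z + (s * star z) * X ω
      + (s * z) * star (X ω) + (s : ℂ) ^ 2 * (X ω * star (X ω)) := fun ω => by
    rw [star_add_ofReal_mul]; ring
  simp_rw [expand]
  simp (disch := fun_prop) only [integral_add, integral_const_mul, integral_const, hmean,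
    integral_star_eq_zero hmean, hvar]
  simp [Complex.mul_conj']

lemma integral_mul_star_mul_mul_star_add_ofReal_mul (z : ℂ) (s : ℝ) (hX : MemLp X 4 μ)
    (hmean : ∫ ω, X ω ∂μ = 0) (hpseudo : ∫ ω, X ω * X ω ∂μ = 0)
    (hodd₁ : ∫ ω, X ω * X ω * star (X ω) ∂μ = 0)
    (hodd₂ : ∫ ω, X ω * star (X ω) * star (X ω) ∂μ = 0)
    (hvar : ∫ ω, X ω * star (X ω) ∂μ = σ)
    (hfourth : ∫ ω, X ω * star (X ω) * X ω * star (X ω) ∂μ = 2 * σ ^ 2) :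
    ∫ ω, (z + s * X ω) * star (z + s * X ω) * ((z + s * X ω) * star (z + s * X ω)) ∂μ
      = ((2 * (‖z‖ ^ 2 + s ^ 2 * σ) ^ 2 - ‖z‖ ^ 4 : ℝ) : ℂ) := by
  have hXs : MemLp (fun ω => star (X ω)) 4 μ := hX.star
  have hint₁ : Integrable X μ := hX.integrable (by norm_num)
  have hint₁' : Integrable (fun ω => star (X ω)) μ := hXs.integrable (by norm_num)
  have hint₂ := integrable_mul_of_memLp_four hX hX
  have hint₂' := integrable_mul_of_memLp_four hXs hXs
  have hint₂'' := integrable_mul_of_memLp_four hX hXs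
  have hint₃ := integrable_mul_mul_of_memLp_four hX hX hXs
  have hint₃' := integrable_mul_mul_of_memLp_four hX hXs hXs
  have hint₄ : Integrable (fun ω => X ω * star (X ω) * X ω * star (X ω)) μ := by
    simpa only [mul_assoc] using integrable_mul_mul_mul_of_memLp_four hX hXs hX hXs
  have expand : ∀ ω, (z + s * X ω) * star (z + s * X ω) * ((z + s * X ω) * star (z + s * X ω))
      = (z * star z) ^ 2 + (2 * s * z * star z ^ 2) * X ω + (2 * s * z ^ 2 * star z) * star (X ω)
        + ((s : ℂ) ^ 2 * star z ^ 2) * (X ω * X ω)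
        + ((s : ℂ) ^ 2 * z ^ 2) * (star (X ω) * star (X ω))
        + (4 * (s : ℂ) ^ 2 * (z * star z)) * (X ω * star (X ω))
        + (2 * (s : ℂ) ^ 3 * star z) * (X ω * X ω * star (X ω))
        + (2 * (s : ℂ) ^ 3 * z) * (X ω * star (X ω) * star (X ω))
        + (s : ℂ) ^ 4 * (X ω * star (X ω) * X ω * star (X ω)) := fun ω => by
    rw [star_add_ofReal_mul]; ring
  have hpseudo' : ∫ ω, star (X ω) * star (X ω) ∂μ = 0 := by
    simpa only [star_mul'] using integral_star_eq_zero hpseudo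
  simp_rw [expand]
  simp (disch := fun_prop) only [integral_add, integral_const_mul, integral_const, hmean,
    integral_star_eq_zero hmean, hpseudo, hpseudo', hodd₁, hodd₂, hvar, hfourth]
  simp [Complex.mul_conj']
  ring

end Moments

section Independence

variable {Ω ι 𝕜 : Type*} [MeasurableSpace Ω] [RCLike 𝕜] {μ : Measure Ω} {Y : ι → Ω → 𝕜}

lemma ProbabilityTheory.iIndepFun.integral_mul_star_of_ne (hind : iIndepFun Y μ)
    (hY : ∀ a, AEMeasurable (Y a) μ) {a b : ι} (hab : a ≠ b) :
    ∫ ω, Y a ω * star (Y b ω) ∂μ = (∫ ω, Y a ω ∂μ) * star (∫ ω, Y b ω ∂μ) :=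
  ((hind.indepFun hab).integral_fun_comp_mul_comp (f := id) (g := star) (hY a) (hY b)
    aestronglyMeasurable_id continuous_star.aestronglyMeasurable).trans (congrArg _ integral_conj)

lemma ProbabilityTheory.iIndepFun.integral_mul_star_mul_mul_star_of_ne (hind : iIndepFun Y μ)
    (hY : ∀ a, AEMeasurable (Y a) μ) {a b c d : ι} (hac : a ≠ c) (had : a ≠ d) (hbc : b ≠ c)
    (hbd : b ≠ d) :
    ∫ ω, Y a ω * star (Y b ω) * (Y c ω * star (Y d ω)) ∂μ
      = (∫ ω, Y a ω * star (Y b ω) ∂μ) * ∫ ω, Y c ω * star (Y d ω) ∂μ :=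
  (hind.indepFun_prodMk_prodMk₀ hY a b c d hac had hbc hbd).integral_fun_comp_mul_comp
    (f := fun p : 𝕜 × 𝕜 => p.1 * star p.2) (g := fun p : 𝕜 × 𝕜 => p.1 * star p.2)
    ((hY a).prodMk (hY b)) ((hY c).prodMk (hY d))
    (by fun_prop : Continuous fun p : 𝕜 × 𝕜 => p.1 * star p.2).aestronglyMeasurable
    (by fun_prop : Continuous fun p : 𝕜 × 𝕜 => p.1 * star p.2).aestronglyMeasurable

end Independence

section Purity

variable {ι κ : Type*}

noncomputable def localPurity [Fintype ι] [Fintype κ] (v : ι × κ → ℂ) : ℝ :=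
  ∑ i, ∑ j, ‖∑ m, v (i, m) * star (v (j, m))‖ ^ 2

def localPurityTerm (v : ι × κ → ℂ) (i j : ι) (m m' : κ) : ℂ :=
  v (i, m) * star (v (j, m)) * (v (j, m') * star (v (i, m')))

lemma ofReal_localPurity [Fintype ι] [Fintype κ] (v : ι × κ → ℂ) :
    (localPurity v : ℂ) = ∑ i, ∑ j, ∑ m, ∑ m', localPurityTerm v i j m m' := by
  simp only [localPurity, localPurityTerm, Complex.ofReal_sum, Complex.ofReal_pow,
    ← Complex.mul_conj', ← Complex.star_def, star_sum, star_mul, star_star, sum_mul_sum]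

lemma localPurity_const_mul [Fintype ι] [Fintype κ] (c : ℂ) (v : ι × κ → ℂ) :
    localPurity (fun a => c * v a) = ‖c‖ ^ 4 * localPurity v := by
  have h : ∀ i j, ‖∑ m, c * v (i, m) * star (c * v (j, m))‖ ^ 2
      = ‖c‖ ^ 4 * ‖∑ m, v (i, m) * star (v (j, m))‖ ^ 2 := fun i j => by
    have : ∑ m, c * v (i, m) * star (c * v (j, m))
        = c * star c * ∑ m, v (i, m) * star (v (j, m)) := by
      rw [mul_sum]
      exact sum_congr rfl fun m _ => by rw [star_mul']; ring
    rw [this, Complex.star_def, Complex.mul_conj', norm_mul, norm_pow, Complex.norm_real, norm_norm]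
    ring
  simp only [localPurity, h, mul_sum]

end Purity

section ExpectedPurity

variable {Ω ι κ : Type*} [MeasurableSpace Ω] {μ : Measure Ω} {Y : ι × κ → Ω → ℂ}
  {y : ι × κ → ℂ} {τ : ℝ}

lemma integral_localPurityTerm [DecidableEq ι] [DecidableEq κ] (hind : iIndepFun Y μ)
    (hY : ∀ a, AEMeasurable (Y a) μ) (hmean : ∀ a, ∫ ω, Y a ω ∂μ = y a)
    (hsecond : ∀ a, ∫ ω, Y a ω * star (Y a ω) ∂μ = ((‖y a‖ ^ 2 + τ : ℝ) : ℂ))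
    (hfourth : ∀ a, ∫ ω, Y a ω * star (Y a ω) * (Y a ω * star (Y a ω)) ∂μ
      = ((2 * (‖y a‖ ^ 2 + τ) ^ 2 - ‖y a‖ ^ 4 : ℝ) : ℂ)) (i j : ι) (m m' : κ) :
    ∫ ω, localPurityTerm (fun a => Y a ω) i j m m' ∂μ
      = localPurityTerm y i j m m'
        + (((if m = m' then τ * (‖y (i, m)‖ ^ 2 + ‖y (j, m)‖ ^ 2) + τ ^ 2 else 0)
          + (if i = j then τ * (‖y (i, m)‖ ^ 2 + ‖y (i, m')‖ ^ 2) + τ ^ 2 else 0) : ℝ) : ℂ) := by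
  have hnorm : ∀ a, y a * star (y a) = ((‖y a‖ ^ 2 : ℝ) : ℂ) := fun a => by
    rw [Complex.star_def, Complex.mul_conj', Complex.ofReal_pow]
  have hfst : ∀ {i j : ι} {m m' : κ}, i ≠ j → (i, m) ≠ (j, m') :=
    fun h e => h (congrArg Prod.fst e)
  have hsnd : ∀ {i j : ι} {m m' : κ}, m ≠ m' → (i, m) ≠ (j, m') :=
    fun h e => h (congrArg Prod.snd e)
  simp only [localPurityTerm]
  rcases eq_or_ne m m' with rfl | hm <;> rcases eq_or_ne i j with rfl | hij
  · rw [hfourth, hnorm]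
    simp only [if_true]
    push_cast
    ring
  · have hswap : ∀ ω, Y (i, m) ω * star (Y (j, m) ω) * (Y (j, m) ω * star (Y (i, m) ω))
        = Y (i, m) ω * star (Y (i, m) ω) * (Y (j, m) ω * star (Y (j, m) ω)) := fun ω => by ring
    rw [integral_congr_ae (ae_of_all _ hswap),
      hind.integral_mul_star_mul_mul_star_of_ne hY (hfst hij) (hfst hij) (hfst hij) (hfst hij),
      hsecond, hsecond, show y (i, m) * star (y (j, m)) * (y (j, m) * star (y (i, m)))
        = y (i, m) * star (y (i, m)) * (y (j, m) * star (y (j, m))) by ring, hnorm, hnorm]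
    simp only [if_true, if_neg hij]
    push_cast
    ring
  · rw [hind.integral_mul_star_mul_mul_star_of_ne hY (hsnd hm) (hsnd hm) (hsnd hm) (hsnd hm),
      hsecond, hsecond, hnorm, hnorm]
    simp only [if_true, if_neg hm]
    push_cast
    ring
  · rw [hind.integral_mul_star_mul_mul_star_of_ne hY (hsnd hm) (hsnd hm) (hsnd hm) (hsnd hm),
      hind.integral_mul_star_of_ne hY (hfst hij), hind.integral_mul_star_of_ne hY (hfst hij.symm),
      hmean, hmean, hmean, hmean]
    simp only [if_neg hm, if_neg hij]
    push_cast
    ring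

theorem integral_localPurity_of_iIndepFun [Fintype ι] [Fintype κ] (hind : iIndepFun Y μ)
    (hY : ∀ a, MemLp (Y a) 4 μ) (hmean : ∀ a, ∫ ω, Y a ω ∂μ = y a)
    (hsecond : ∀ a, ∫ ω, Y a ω * star (Y a ω) ∂μ = ((‖y a‖ ^ 2 + τ : ℝ) : ℂ))
    (hfourth : ∀ a, ∫ ω, Y a ω * star (Y a ω) * (Y a ω * star (Y a ω)) ∂μ
      = ((2 * (‖y a‖ ^ 2 + τ) ^ 2 - ‖y a‖ ^ 4 : ℝ) : ℂ)) :
    ∫ ω, localPurity (fun a => Y a ω) ∂μ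
      = localPurity y + 2 * (Fintype.card ι + Fintype.card κ) * τ * ∑ a, ‖y a‖ ^ 2
        + Fintype.card ι * Fintype.card κ * (Fintype.card ι + Fintype.card κ) * τ ^ 2 := by
  classical
  have hint : ∀ i j m m', Integrable (fun ω => localPurityTerm (fun a => Y a ω) i j m m') μ :=
    fun i j m m' => integrable_mul_mul_mul_of_memLp_four (hY _) (hY _).star (hY _) (hY _).star
  have hsum_snd : ∑ i : ι, ∑ j : ι, ∑ m : κ, ∑ m' : κ,
      (if m = m' then τ * (‖y (i, m)‖ ^ 2 + ‖y (j, m)‖ ^ 2) + τ ^ 2 else 0)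
      = 2 * Fintype.card ι * τ * ∑ a, ‖y a‖ ^ 2 + Fintype.card ι ^ 2 * Fintype.card κ * τ ^ 2 := by
    simp [sum_add_distrib, ← mul_sum, Fintype.sum_prod_type]
    ring
  have hsum_fst : ∑ i : ι, ∑ j : ι, ∑ m : κ, ∑ m' : κ,
      (if i = j then τ * (‖y (i, m)‖ ^ 2 + ‖y (i, m')‖ ^ 2) + τ ^ 2 else 0)
      = 2 * Fintype.card κ * τ * ∑ a, ‖y a‖ ^ 2 + Fintype.card ι * Fintype.card κ ^ 2 * τ ^ 2 := by
    simp [sum_ite_irrel, sum_add_distrib, ← mul_sum, Fintype.sum_prod_type]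
    ring
  apply Complex.ofReal_injective
  rw [← integral_complex_ofReal]
  simp_rw [ofReal_localPurity]
  simp (disch := exact fun _ _ => by fun_prop) only [integral_finsetSum]
  simp only [integral_localPurityTerm hind (fun a => (hY a).aestronglyMeasurable.aemeasurable)
    hmean hsecond hfourth, sum_add_distrib, ← ofReal_localPurity, ← Complex.ofReal_sum, hsum_snd,
    hsum_fst]
  push_cast
  ring

end ExpectedPurity

theorem polarized_average_purity_general {Ω : Type*} [MeasurableSpace Ω] {μ : Measure Ω}
    [IsProbabilityMeasure μ] (N M : ℕ) (hN : 0 < N) (hM : 0 < M)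
    (purity : (Fin N × Fin M → ℂ) → ℝ)
    (hpurity : ∀ v, purity v
      = ∑ i : Fin N, ∑ j : Fin N, ‖∑ m : Fin M, v (i, m) * star (v (j, m))‖ ^ 2)
    (φ₀ : Fin N × Fin M → ℂ) (hφ₀ : ∑ a : Fin N × Fin M, ‖φ₀ a‖ ^ 2 = 1)
    (π₀ : ℝ) (hπ₀ : π₀ = purity φ₀)
    (X : Fin N × Fin M → Ω → ℂ)
    (hindep : iIndepFun X μ)
    (hL4 : ∀ a, MemLp (X a) 4 μ)
    (hmean : ∀ a, ∫ ω, X a ω ∂μ = 0)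
    (hpseudo : ∀ a, ∫ ω, X a ω * X a ω ∂μ = 0)
    (hodd1 : ∀ a, ∫ ω, X a ω * X a ω * star (X a ω) ∂μ = 0)
    (hodd2 : ∀ a, ∫ ω, X a ω * star (X a ω) * star (X a ω) ∂μ = 0)
    (hvar : ∀ a, ∫ ω, X a ω * star (X a ω) ∂μ = 1 / ((N : ℂ) * M))
    (hfourth : ∀ a, ∫ ω, X a ω * star (X a ω) * X a ω * star (X a ω) ∂μ
      = 2 / ((N : ℂ) * M) ^ 2)
    (ε : ℝ) (hε0 : 0 ≤ ε) (hε1 : ε ≤ 1)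
    (ψ : Ω → Fin N × Fin M → ℂ)
    (hψ : ∀ ω a, ψ ω a = (ε : ℂ) * φ₀ a + (Real.sqrt (1 - ε ^ 2) : ℂ) * X a ω) :
    ∫ ω, purity (ψ ω) ∂μ
      = ε ^ 4 * π₀ + (1 - ε ^ 4) * (((M : ℝ) + N) / ((M : ℝ) * N)) := by
  set s := Real.sqrt (1 - ε ^ 2)
  set σ : ℝ := 1 / (N * M)
  have hs : s ^ 2 = 1 - ε ^ 2 := Real.sq_sqrt (by nlinarith)
  have hvar' : ∀ a, ∫ ω, X a ω * star (X a ω) ∂μ = σ := fun a => by rw [hvar a]; simp [σ]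
  have hfourth' : ∀ a, ∫ ω, X a ω * star (X a ω) * X a ω * star (X a ω) ∂μ = 2 * σ ^ 2 :=
    fun a => by rw [hfourth a]; simp [σ]; ring
  obtain rfl : ψ = fun ω a => (ε : ℂ) * φ₀ a + s * X a ω := funext fun ω => funext (hψ ω)
  have hind : iIndepFun (fun a ω => (ε : ℂ) * φ₀ a + s * X a ω) μ :=
    hindep.comp (fun a z => (ε : ℂ) * φ₀ a + s * z) fun a => by fun_prop
  have hnorm : ∑ a, ‖(ε : ℂ) * φ₀ a‖ ^ 2 = ε ^ 2 := by simp [mul_pow, ← mul_sum, hφ₀]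
  have hL4' : ∀ a, MemLp (fun ω => (ε : ℂ) * φ₀ a + s * X a ω) 4 μ :=
    fun a => (memLp_const ((ε : ℂ) * φ₀ a)).add ((hL4 a).const_mul (s : ℂ))
  have expected := integral_localPurity_of_iIndepFun (y := fun a => (ε : ℂ) * φ₀ a)
    (τ := s ^ 2 * σ) hind hL4'
    (fun a => integral_add_ofReal_mul _ _ ((hL4 a).integrable (by norm_num)) (hmean a))
    (fun a => integral_mul_star_add_ofReal_mul _ _ ((hL4 a).mono_exponent (by norm_num))
      (hmean a) (hvar' a))
    (fun a => integral_mul_star_mul_mul_star_add_ofReal_mul _ _ (hL4 a) (hmean a) (hpseudo a)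
      (hodd1 a) (hodd2 a) (hvar' a) (hfourth' a))
  rw [hπ₀, show purity = localPurity from funext hpurity]
  refine expected.trans ?_
  rw [localPurity_const_mul, hnorm, Complex.norm_real, Real.norm_of_nonneg hε0]
  simp only [Fintype.card_fin, σ, hs]
  field_simp
  ring

/-- For a fixed unit vector `φ₀` in `ℂ^N ⊗ ℂ^M` with local purity `π₀`, and a
Gaussian random vector `φ` with i.i.d. complex Gaussian components of mean 0, vanishing
pseudo-variance and odd moments, variance `1/(NM)` (hence fourth moment `2/(NM)²`),
the expected local purity of `ψ = ε φ₀ + √(1-ε²) φ` is `ε⁴ π₀ + (1-ε⁴)(M+N)/(MN)`.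
Here the local purity of a vector `v` is `Tr((Tr_B vv*)²) = ∑_{i,j} ‖∑_μ v_{iμ} conj(v_{jμ})‖²`. -/
theorem polarized_average_purity {Ω : Type*} [MeasurableSpace Ω] {μ : Measure Ω}
    [IsProbabilityMeasure μ] (N M : ℕ) (hN : 0 < N) (hM : 0 < M) (hNM : N ≤ M)
    (purity : (Fin N × Fin M → ℂ) → ℝ)
    (hpurity : ∀ v, purity v
      = ∑ i : Fin N, ∑ j : Fin N, ‖∑ m : Fin M, v (i, m) * star (v (j, m))‖ ^ 2)
    (φ₀ : Fin N × Fin M → ℂ) (hφ₀ : ∑ a : Fin N × Fin M, ‖φ₀ a‖ ^ 2 = 1)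
    (π₀ : ℝ) (hπ₀ : π₀ = purity φ₀)
    (X : Fin N × Fin M → Ω → ℂ)
    (hmeas : ∀ a, Measurable (X a))
    (hindep : iIndepFun X μ)
    (hL4 : ∀ a, MemLp (X a) 4 μ)
    (hmean : ∀ a, ∫ ω, X a ω ∂μ = 0)
    (hpseudo : ∀ a, ∫ ω, X a ω * X a ω ∂μ = 0)
    (hodd1 : ∀ a, ∫ ω, X a ω * X a ω * star (X a ω) ∂μ = 0)
    (hodd2 : ∀ a, ∫ ω, X a ω * star (X a ω) * star (X a ω) ∂μ = 0)
    (hvar : ∀ a, ∫ ω, X a ω * star (X a ω) ∂μ = 1 / ((N : ℂ) * M))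
    (hfourth : ∀ a, ∫ ω, X a ω * star (X a ω) * X a ω * star (X a ω) ∂μ
      = 2 / ((N : ℂ) * M) ^ 2)
    (ε : ℝ) (hε0 : 0 ≤ ε) (hε1 : ε ≤ 1)
    (ψ : Ω → Fin N × Fin M → ℂ)
    (hψ : ∀ ω a, ψ ω a = (ε : ℂ) * φ₀ a + (Real.sqrt (1 - ε ^ 2) : ℂ) * X a ω) :
    ∫ ω, purity (ψ ω) ∂μ
      = ε ^ 4 * π₀ + (1 - ε ^ 4) * (((M : ℝ) + N) / ((M : ℝ) * N)) :=
  polarized_average_purity_general N M hN hM purity hpurity φ₀ hφ₀ π₀ hπ₀ X hindep hL4 hmean hpseudo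
    hodd1 hodd2 hvar hfourth ε hε0 hε1 ψ hψ
end

section
/- (Lubkin's formula) If φ is uniformly distributed on the unit sphere of ℂ^N ⊗ ℂ^M, then E[Tr((Tr_B |φ⟩⟨φ|)²)] = (M+N)/(MN+1). -/
/-!
Expanding the square, the expected purity is a sum of fourth moments
`E[φ_a φ_b φ̄_c φ̄_d]` of a unitarily invariant unit vector `φ ∈ ℂⁿ`, `n = NM`.
Invariance under a diagonal phase kills every such moment unless `{a, b} = {c, d}`;
invariance under a reflection mixing two coordinates gives
`E|φ_a|⁴ = E|φ_b|⁴ = 2 E|φ_a|²|φ_b|²`, and `∑_{a,b} E|φ_a|²|φ_b|² = 1` fixes the scale.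
Hence `E[φ_a φ_b φ̄_c φ̄_d] = (δ_ac δ_bd + δ_ad δ_bc) / (n (n + 1))`, and the sum is
`(N M² + N² M) / (N M (N M + 1))`.
-/

open MeasureTheory Finset Matrix ComplexConjugate

namespace Matrix

variable {n α : Type*} [Fintype n] [DecidableEq n] [CommRing α] [StarRing α]

def householder (v : n → α) : Matrix n n α := 1 - (2 : α) • vecMulVec v (star v)

theorem householder_mulVec (v w : n → α) :
    householder v *ᵥ w = w - (2 * (star v ⬝ᵥ w)) • v := by
  ext i
  simp [householder, sub_mulVec, smul_mulVec, vecMulVec_mulVec]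
  ring

theorem householder_mem_unitaryGroup {v : n → α} (hv : star v ⬝ᵥ v = 1) :
    householder v ∈ unitaryGroup n α := by
  have hstar : star (householder v) = householder v := by
    simp [householder, star_sub, star_eq_conjTranspose]
  have hsq : vecMulVec v (star v) * vecMulVec v (star v) = vecMulVec v (star v) := by
    rw [vecMulVec_mul_vecMulVec, hv, one_smul]
  rw [mem_unitaryGroup_iff, hstar, householder]
  simp only [sub_mul, mul_sub, one_mul, mul_one, Matrix.smul_mul, Matrix.mul_smul, hsq, smul_smul]
  module

theorem diagonal_mem_unitaryGroup {u : n → α} (hu : ∀ i, star (u i) * u i = 1) :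
    diagonal u ∈ unitaryGroup n α := by
  rw [mem_unitaryGroup_iff', star_eq_conjTranspose, diagonal_conjTranspose, diagonal_mul_diagonal]
  simp [hu]

end Matrix

theorem sum_norm_add_I_pow_mul_pow_four (s t : ℝ) (x y : ℂ) :
    ∑ k ∈ range 4, ‖s * x + t * (Complex.I ^ k * y)‖ ^ 4
      = 4 * (s ^ 4 * (‖x‖ ^ 2 * ‖x‖ ^ 2) + t ^ 4 * (‖y‖ ^ 2 * ‖y‖ ^ 2)
        + 4 * s ^ 2 * t ^ 2 * (‖x‖ ^ 2 * ‖y‖ ^ 2)) := by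
  have h2 : ∀ w : ℂ, ‖w‖ ^ 2 = Complex.normSq w := Complex.sq_norm
  have h4 : ∀ w : ℂ, ‖w‖ ^ 4 = Complex.normSq w ^ 2 := fun w => by rw [← h2]; ring
  simp only [sum_range_succ, sum_range_zero, h2, h4]
  simp [Complex.normSq_apply, pow_succ]
  ring

theorem ofReal_norm_sum_mul_star_sq {κ : Type*} [Fintype κ] (x y : κ → ℂ) :
    (‖∑ m, x m * star (y m)‖ : ℂ) ^ 2
      = ∑ m, ∑ m', x m * y m' * conj (y m) * conj (x m') := by
  rw [← Complex.mul_conj', map_sum, sum_mul_sum]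
  congr! 2 with m _ m' _
  simp only [Complex.star_def, map_mul, Complex.conj_conj]
  ring

section UnitNorm

variable {Ω ι : Type*} [MeasurableSpace Ω] {μ : Measure Ω} {φ : Ω → ι → ℂ}

noncomputable def sqNormMoment (μ : Measure Ω) (φ : Ω → ι → ℂ) (a b : ι) : ℝ :=
  ∫ ω, ‖φ ω a‖ ^ 2 * ‖φ ω b‖ ^ 2 ∂μ

theorem integral_mul_mul_conj_mul_conj_self (a b : ι) :
    ∫ ω, φ ω a * φ ω b * conj (φ ω a) * conj (φ ω b) ∂μ = sqNormMoment μ φ a b := by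
  rw [sqNormMoment, ← integral_complex_ofReal]
  congr 1 with ω
  push_cast
  rw [← Complex.mul_conj', ← Complex.mul_conj']
  ring

variable [Fintype ι]

theorem integrable_comp_of_sum_sq_norm_eq_one [IsFiniteMeasure μ] {E : Type*}
    [NormedAddCommGroup E] (hmeas : Measurable φ) (hnorm : ∀ᵐ ω ∂μ, ∑ a, ‖φ ω a‖ ^ 2 = 1)
    {g : (ι → ℂ) → E} (hg : Continuous g) : Integrable (fun ω => g (φ ω)) μ := by
  obtain ⟨C, hC⟩ :=
    (isCompact_closedBall (0 : ι → ℂ) 1).exists_bound_of_continuousOn hg.continuousOn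
  refine .of_bound (hg.comp_aestronglyMeasurable hmeas.aestronglyMeasurable) C ?_
  filter_upwards [hnorm] with ω hω
  refine hC _ (mem_closedBall_zero_iff.mpr
    ((pi_norm_le_iff_of_nonneg zero_le_one).mpr fun a => ?_))
  have : ‖φ ω a‖ ^ 2 ≤ 1 :=
    hω ▸ single_le_sum (f := fun b => ‖φ ω b‖ ^ 2) (fun b _ => by positivity) (mem_univ a)
  exact (sq_le_one_iff₀ (norm_nonneg _)).mp this

theorem integrable_mul_mul_conj_mul_conj [IsFiniteMeasure μ] (hmeas : Measurable φ)
    (hnorm : ∀ᵐ ω ∂μ, ∑ a, ‖φ ω a‖ ^ 2 = 1) (a b c d : ι) :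
    Integrable (fun ω => φ ω a * φ ω b * conj (φ ω c) * conj (φ ω d)) μ :=
  integrable_comp_of_sum_sq_norm_eq_one hmeas hnorm
    (g := fun v => v a * v b * conj (v c) * conj (v d)) (by fun_prop)

theorem integrable_sq_norm_mul_sq_norm [IsFiniteMeasure μ] (hmeas : Measurable φ)
    (hnorm : ∀ᵐ ω ∂μ, ∑ a, ‖φ ω a‖ ^ 2 = 1) (a b : ι) :
    Integrable (fun ω => ‖φ ω a‖ ^ 2 * ‖φ ω b‖ ^ 2) μ :=
  integrable_comp_of_sum_sq_norm_eq_one hmeas hnorm (g := fun v => ‖v a‖ ^ 2 * ‖v b‖ ^ 2)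
    (by fun_prop)

theorem sum_sqNormMoment [IsProbabilityMeasure μ] (hmeas : Measurable φ)
    (hnorm : ∀ᵐ ω ∂μ, ∑ a, ‖φ ω a‖ ^ 2 = 1) : ∑ a, ∑ b, sqNormMoment μ φ a b = 1 := by
  have hint := integrable_sq_norm_mul_sq_norm hmeas hnorm (μ := μ)
  calc ∑ a, ∑ b, sqNormMoment μ φ a b
      = ∫ ω, ∑ a, ∑ b, ‖φ ω a‖ ^ 2 * ‖φ ω b‖ ^ 2 ∂μ := by
        simp (disch := fun_prop) only [integral_finsetSum, sqNormMoment]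
    _ = ∫ _, 1 ∂μ := integral_congr_ae <| by
        filter_upwards [hnorm] with ω h
        rw [← sum_mul_sum, h, one_mul]
    _ = 1 := by simp

end UnitNorm

section UnitarilyInvariant

variable {Ω ι : Type*} [MeasurableSpace Ω] {μ : Measure Ω} [Fintype ι] [DecidableEq ι]
  {φ : Ω → ι → ℂ}

def IsUnitarilyInvariant (μ : Measure Ω) (φ : Ω → ι → ℂ) : Prop :=
  ∀ U ∈ unitaryGroup ι ℂ, μ.map (fun ω => U *ᵥ φ ω) = μ.map φ

theorem IsUnitarilyInvariant.integral_comp_mulVec (hinv : IsUnitarilyInvariant μ φ)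
    (hmeas : Measurable φ) {E : Type*} [NormedAddCommGroup E] [NormedSpace ℝ E]
    {g : (ι → ℂ) → E} (hg : Continuous g) {U : Matrix ι ι ℂ} (hU : U ∈ unitaryGroup ι ℂ) :
    ∫ ω, g (U *ᵥ φ ω) ∂μ = ∫ ω, g (φ ω) ∂μ := by
  have hUφ : Measurable fun ω => U *ᵥ φ ω :=
    (continuous_const.matrix_mulVec continuous_id).measurable.comp hmeas
  rw [← integral_map hUφ.aemeasurable hg.aestronglyMeasurable, hinv U hU,
    integral_map hmeas.aemeasurable hg.aestronglyMeasurable]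

theorem IsUnitarilyInvariant.integral_mul_mul_conj_mul_conj_eq_mul
    (hinv : IsUnitarilyInvariant μ φ) (hmeas : Measurable φ) {u : ι → ℂ} (hu : ∀ i, ‖u i‖ = 1)
    (a b c d : ι) :
    ∫ ω, φ ω a * φ ω b * conj (φ ω c) * conj (φ ω d) ∂μ
      = u a * u b * conj (u c) * conj (u d) *
        ∫ ω, φ ω a * φ ω b * conj (φ ω c) * conj (φ ω d) ∂μ := by
  have hU : diagonal u ∈ unitaryGroup ι ℂ := diagonal_mem_unitaryGroup fun i => by
    simp [← Complex.normSq_eq_conj_mul_self, Complex.normSq_eq_norm_sq, hu]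
  rw [← integral_const_mul, ← hinv.integral_comp_mulVec hmeas
    (g := fun v => v a * v b * conj (v c) * conj (v d)) (by fun_prop) hU]
  congr 1 with ω
  simp only [mulVec_diagonal, map_mul]
  ring

theorem IsUnitarilyInvariant.integral_mul_mul_conj_mul_conj_eq_zero
    (hinv : IsUnitarilyInvariant μ φ) (hmeas : Measurable φ) {a b c d : ι}
    (h₁ : ¬(a = c ∧ b = d)) (h₂ : ¬(a = d ∧ b = c)) :
    ∫ ω, φ ω a * φ ω b * conj (φ ω c) * conj (φ ω d) ∂μ = 0 := by
  -- Multiplying the coordinate `e` by `i` multiplies the moment by `i ^ k`, where `k` counts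
  -- `e` among `a, b` minus among `c, d`; some `e` has `k ≠ 0`, and `|k| ≤ 2`.
  set u : ι → ι → ℂ := fun e x => if e = x then Complex.I else 1
  have hu : ∀ e x, ‖u e x‖ = 1 := by intro e x; simp only [u]; split_ifs <;> simp
  obtain ⟨e, he⟩ : ∃ e, u e a * u e b * conj (u e c) * conj (u e d) ≠ 1 := by
    by_cases hc : a = c ∨ a = d
    · refine ⟨b, ?_⟩
      rcases hc with rfl | rfl <;> by_cases hab : a = b <;> simp_all [u, Complex.ext_iff]
    · obtain ⟨hac, had⟩ : a ≠ c ∧ a ≠ d := by tauto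
      refine ⟨a, ?_⟩
      rcases eq_or_ne a b with rfl | hab
      · norm_num [u, hac, had, Complex.ext_iff]
      · norm_num [u, hab, hac, had, Complex.ext_iff]
  have := hinv.integral_mul_mul_conj_mul_conj_eq_mul hmeas (hu e) a b c d
  exact (mul_left_eq_self₀.mp this.symm).resolve_left he

/- The reflection in `v = 3/5 e_a + 4/5 z̄ e_b` has `a`-th row `(7/25, -24/25 z)`; averaging
over the phases `z ∈ {1, i, -1, -i}` removes the cross terms of `|7 φ_a - 24 z φ_b|⁴`. -/
theorem IsUnitarilyInvariant.sqNormMoment_self_eq [IsFiniteMeasure μ]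
    (hinv : IsUnitarilyInvariant μ φ) (hmeas : Measurable φ)
    (hnorm : ∀ᵐ ω ∂μ, ∑ a, ‖φ ω a‖ ^ 2 = 1) {a b : ι} (hab : a ≠ b) :
    sqNormMoment μ φ a a = (7 / 25) ^ 4 * sqNormMoment μ φ a a
      + (-24 / 25) ^ 4 * sqNormMoment μ φ b b
      + 4 * (7 / 25) ^ 2 * (-24 / 25) ^ 2 * sqNormMoment μ φ a b := by
  set ψ : ℕ → (ι → ℂ) → ℂ :=
    fun k w => ((7 / 25 : ℝ) : ℂ) * w a + ((-24 / 25 : ℝ) : ℂ) * (Complex.I ^ k * w b)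
  have hmix : ∀ k, ∃ U ∈ unitaryGroup ι ℂ, ∀ w, (U *ᵥ w) a = ψ k w := by
    intro k
    have hz : ‖Complex.I ^ k‖ = 1 := by simp
    simp only [ψ]
    generalize Complex.I ^ k = z at hz ⊢
    replace hz : conj z * z = 1 := by rw [Complex.conj_mul', hz]; simp
    set v : ι → ℂ := Pi.single a (3 / 5) + Pi.single b (4 / 5 * conj z)
    refine ⟨householder v, householder_mem_unitaryGroup ?_, fun w => ?_⟩
    · simp only [v, star_add, add_dotProduct, dotProduct_add]
      simp [hab]
      linear_combination (16 / 25) * hz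
    · simp [householder_mulVec, v, star_add, add_dotProduct, hab]
      ring
  have hphase : ∀ k ∈ range 4, sqNormMoment μ φ a a = ∫ ω, ‖ψ k (φ ω)‖ ^ 4 ∂μ := by
    intro k _
    obtain ⟨U, hU, hUw⟩ := hmix k
    rw [show sqNormMoment μ φ a a = ∫ ω, ‖φ ω a‖ ^ 4 ∂μ by simp only [sqNormMoment, ← pow_add],
      ← hinv.integral_comp_mulVec hmeas (g := fun w => ‖w a‖ ^ 4) (by fun_prop) hU]
    simp only [hUw]
  suffices h : 4 * sqNormMoment μ φ a a = 4 * ((7 / 25) ^ 4 * sqNormMoment μ φ a a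
      + (-24 / 25) ^ 4 * sqNormMoment μ φ b b
      + 4 * (7 / 25) ^ 2 * (-24 / 25) ^ 2 * sqNormMoment μ φ a b) by linarith
  calc 4 * sqNormMoment μ φ a a
      = ∑ k ∈ range 4, ∫ ω, ‖ψ k (φ ω)‖ ^ 4 ∂μ := by
        rw [← sum_congr rfl hphase, sum_const, card_range, nsmul_eq_mul, Nat.cast_ofNat]
    _ = ∫ ω, ∑ k ∈ range 4, ‖ψ k (φ ω)‖ ^ 4 ∂μ := by
        refine (integral_finsetSum _ fun k _ => ?_).symm
        exact integrable_comp_of_sum_sq_norm_eq_one hmeas hnorm (g := fun w => ‖ψ k w‖ ^ 4)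
          (by fun_prop)
    _ = _ := by
        have hint := integrable_sq_norm_mul_sq_norm hmeas hnorm (μ := μ)
        simp (disch := fun_prop) only [ψ, sum_norm_add_I_pow_mul_pow_four, integral_const_mul,
          integral_add]
        rfl

variable [IsProbabilityMeasure μ]

theorem IsUnitarilyInvariant.sqNormMoment_eq (hinv : IsUnitarilyInvariant μ φ)
    (hmeas : Measurable φ) (hnorm : ∀ᵐ ω ∂μ, ∑ a, ‖φ ω a‖ ^ 2 = 1) (a b : ι) :
    sqNormMoment μ φ a b = (if a = b then 2 else 1) / (Fintype.card ι * (Fintype.card ι + 1)) := by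
  have hmix : ∀ {x y : ι}, x ≠ y →
      sqNormMoment μ φ x x = sqNormMoment μ φ y y ∧
        sqNormMoment μ φ x x = 2 * sqNormMoment μ φ x y := by
    intro x y hxy
    have hxy' := hinv.sqNormMoment_self_eq hmeas hnorm hxy
    have hyx := hinv.sqNormMoment_self_eq hmeas hnorm hxy.symm
    rw [show sqNormMoment μ φ y x = sqNormMoment μ φ x y by simp only [sqNormMoment, mul_comm]]
      at hyx
    constructor <;> linarith
  set P := sqNormMoment μ φ a a
  have hval : ∀ x y, sqNormMoment μ φ x y = (if x = y then 2 else 1) * (P / 2) := by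
    intro x y
    have hx : sqNormMoment μ φ x x = P := by
      rcases eq_or_ne x a with rfl | h
      · rfl
      · exact (hmix h).1
    split_ifs with h
    · subst h; linarith
    · linarith [(hmix h).2]
  have hrow : ∀ x : ι, ∑ y : ι, (if x = y then (2 : ℝ) else 1) = Fintype.card ι + 1 := by
    intro x
    have h : ∀ y, (if x = y then (2 : ℝ) else 1) = 1 + if x = y then 1 else 0 := by
      intro y; split_ifs <;> norm_num
    simp [h, sum_add_distrib]
  have hsum := sum_sqNormMoment hmeas hnorm (μ := μ)
  simp only [hval, ← sum_mul, hrow, sum_const, card_univ, nsmul_eq_mul] at hsum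
  rw [hval]
  have hn : (0 : ℝ) < Fintype.card ι := by exact_mod_cast Fintype.card_pos_iff.mpr ⟨a⟩
  field_simp
  linear_combination 2 * hsum

theorem IsUnitarilyInvariant.integral_mul_mul_conj_mul_conj (hinv : IsUnitarilyInvariant μ φ)
    (hmeas : Measurable φ) (hnorm : ∀ᵐ ω ∂μ, ∑ a, ‖φ ω a‖ ^ 2 = 1) (a b c d : ι) :
    ∫ ω, φ ω a * φ ω b * conj (φ ω c) * conj (φ ω d) ∂μ
      = ((if a = c ∧ b = d then 1 else 0) + (if a = d ∧ b = c then 1 else 0))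
        / (Fintype.card ι * (Fintype.card ι + 1)) := by
  have hself : ∀ x y, ∫ ω, φ ω x * φ ω y * conj (φ ω x) * conj (φ ω y) ∂μ
      = (if x = y then 2 else 1) / (Fintype.card ι * (Fintype.card ι + 1)) := by
    intro x y
    rw [integral_mul_mul_conj_mul_conj_self, hinv.sqNormMoment_eq hmeas hnorm]
    split_ifs <;> push_cast <;> rfl
  by_cases h₁ : a = c ∧ b = d
  · obtain ⟨rfl, rfl⟩ := h₁
    rw [hself]
    by_cases hab : a = b
    · simp [hab]; norm_num
    · simp [hab, Ne.symm hab]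
  by_cases h₂ : a = d ∧ b = c
  · obtain ⟨rfl, rfl⟩ := h₂
    have hab : a ≠ b := fun h => h₁ ⟨h, h.symm⟩
    calc ∫ ω, φ ω a * φ ω b * conj (φ ω b) * conj (φ ω a) ∂μ
        = ∫ ω, φ ω a * φ ω b * conj (φ ω a) * conj (φ ω b) ∂μ := by
          congr 1 with ω; ring
      _ = _ := by rw [hself]; simp [hab, Ne.symm hab]
  rw [hinv.integral_mul_mul_conj_mul_conj_eq_zero hmeas h₁ h₂]
  simp [h₁, h₂]

end UnitarilyInvariant

/-- Lubkin's formula: If `φ` is uniformly distributed on the unit sphere of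
`ℂ^N ⊗ ℂ^M` (unitarily invariant law, a.s. unit norm), then the expected local purity
`E[Tr((Tr_B |φ⟩⟨φ|)²)] = ∑_{i,j} E[‖∑_μ φ_{iμ} conj(φ_{jμ})‖²]` equals `(M+N)/(MN+1)`. -/
theorem lubkin_formula {Ω : Type*} [MeasurableSpace Ω] {μ : Measure Ω}
    [IsProbabilityMeasure μ] (N M : ℕ) (hN : 0 < N) (hM : 0 < M)
    (φ : Ω → Fin N × Fin M → ℂ) (hmeas : Measurable φ)
    (hnorm : ∀ᵐ ω ∂μ, ∑ a : Fin N × Fin M, ‖φ ω a‖ ^ 2 = 1)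
    (hinv : ∀ U ∈ Matrix.unitaryGroup (Fin N × Fin M) ℂ,
      Measure.map (fun ω => U.mulVec (φ ω)) μ = Measure.map φ μ) :
    ∫ ω, (∑ i : Fin N, ∑ j : Fin N,
        ‖∑ m : Fin M, φ ω (i, m) * star (φ ω (j, m))‖ ^ 2) ∂μ
      = ((M : ℝ) + N) / ((M : ℝ) * N + 1) := by
  have hint := integrable_mul_mul_conj_mul_conj hmeas hnorm (μ := μ)
  apply Complex.ofReal_injective
  rw [← integral_complex_ofReal]
  push_cast
  simp (disch := fun_prop) only [ofReal_norm_sum_mul_star_sq, integral_finsetSum]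
  simp only [IsUnitarilyInvariant.integral_mul_mul_conj_mul_conj hinv hmeas hnorm, Prod.mk.injEq,
    and_true, true_and, and_iff_left_of_imp Eq.symm, Fintype.card_prod, Fintype.card_fin]
  simp [sum_add_distrib, ← sum_div, ← mul_sum]
  have hN' : (N : ℂ) ≠ 0 := by exact_mod_cast hN.ne'
  have hM' : (M : ℂ) ≠ 0 := by exact_mod_cast hM.ne'
  have hNM : 1 + (N : ℂ) * M ≠ 0 := by norm_cast; omega
  field_simp
end
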